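/- Let a, b ∈ Aut(T) and let O₁,…,O_k be the orbits of the action of a on the first level X. Suppose there exists a permutation π of X with π⁻¹π_aπ = π_b (where π_a, π_b are the permutations induced by a, b on X) such that for every i = 1,…,k and some (equivalently any) point v ∈ O_i, the automorphisms a^{|O_i|}|_v and b^{|O_i|}|_{v^π} are conjugate in Aut(T). Then a and b are conjugate in Aut(T). -/

import Mathlib

open List

/-- Vertices of the rooted `d`-ary tree `T`: finite words over the alphabet
`X = Fin d`. -/
abbrev Vertex (d : ℕ) := List (Fin d)

/-- `g` is an automorphism of the rooted `d`-ary tree: a bijection of the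
vertex set `X*` preserving word length and the prefix relation. -/
def IsTreeAut {d : ℕ} (g : Equiv.Perm (Vertex d)) : Prop :=
  (∀ v : Vertex d, (g v).length = v.length) ∧
    ∀ v w : Vertex d, g v <+: g (v ++ w)

theorem IsTreeAut.prefix_mono {d : ℕ} {g : Equiv.Perm (Vertex d)} (hg : IsTreeAut g)
    {u u' : Vertex d} (h : u <+: u') : g u <+: g u' := by
  obtain ⟨t, rfl⟩ := h
  exact hg.2 u t

/-- The automorphism group `Aut(T)` of the rooted `d`-ary tree, as a subgroup
of the group of permutations of the vertex set. -/
def treeAut (d : ℕ) : Subgroup (Equiv.Perm (Vertex d)) where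
  carrier := {g | IsTreeAut g}
  one_mem' := ⟨fun _ => rfl, fun v w => ⟨w, rfl⟩⟩
  mul_mem' := by
    intro g h hg hh
    obtain ⟨hg1, hg2⟩ := hg
    obtain ⟨hh1, hh2⟩ := hh
    refine ⟨fun v => ?_, fun v w => ?_⟩
    · simp [Equiv.Perm.mul_apply, hg1, hh1]
    · obtain ⟨t, ht⟩ := hh2 v w
      simp only [Equiv.Perm.mul_apply]
      rw [← ht]
      exact hg2 (h v) t
  inv_mem' := by
    intro g hgmem
    obtain ⟨hg1, hg2⟩ := hgmem
    have hg : IsTreeAut g := ⟨hg1, hg2⟩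
    have hlen' : ∀ v : Vertex d, (g⁻¹ v).length = v.length := by
      intro v
      conv_rhs => rw [← (show ∀ x, g (g⁻¹ x) = x from fun _ => Equiv.Perm.eq_inv_iff_eq.mp rfl) v]
      rw [hg1]
    refine ⟨hlen', fun v w => ?_⟩
    have hle : (g⁻¹ v).length ≤ (g⁻¹ (v ++ w)).length := by
      have h1 := hlen' v
      have h2 := hlen' (v ++ w)
      rw [List.length_append] at h2
      omega
    have htp : (g⁻¹ (v ++ w)).take (g⁻¹ v).length <+: g⁻¹ (v ++ w) :=
      List.take_prefix _ _
    have hgtp : g ((g⁻¹ (v ++ w)).take (g⁻¹ v).length) <+: v ++ w := by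
      have := hg.prefix_mono htp
      rwa [(show ∀ x, g (g⁻¹ x) = x from fun _ => Equiv.Perm.eq_inv_iff_eq.mp rfl)] at this
    have hlen_tp : (g ((g⁻¹ (v ++ w)).take (g⁻¹ v).length)).length = v.length := by
      rw [hg1, List.length_take, min_eq_left hle, hlen' v]
    have hveq : g ((g⁻¹ (v ++ w)).take (g⁻¹ v).length) = v := by
      have h1 := List.prefix_iff_eq_take.mp hgtp
      have h2 := List.prefix_iff_eq_take.mp (List.prefix_append v w)
      rw [h1, hlen_tp]
      exact h2.symm
    have hkey : (g⁻¹ (v ++ w)).take (g⁻¹ v).length = g⁻¹ v := by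
      apply g.injective
      rw [hveq, (show ∀ x, g (g⁻¹ x) = x from fun _ => Equiv.Perm.eq_inv_iff_eq.mp rfl)]
    rw [← hkey]
    exact htp

open scoped Classical in
/-- The state (section) `g|_v` of `g` at the vertex `v` : the unique
automorphism satisfying `g (v ++ w) = g v ++ (g|_v) w` for all `w`. -/
noncomputable def state {d : ℕ} (g : Equiv.Perm (Vertex d)) (v : Vertex d) :
    Equiv.Perm (Vertex d) :=
  if h : Function.Bijective (fun w : Vertex d => (g (v ++ w)).drop v.length) then
    Equiv.ofBijective _ h
  else 1

/-- A finite-state automorphism: one having finitely many states.  The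
finite-state automorphisms form the group `F(X)`. -/
def FiniteState {d : ℕ} (g : Equiv.Perm (Vertex d)) : Prop :=
  (Set.range fun v : Vertex d => state g v).Finite

/-- The cardinality of the orbit `Orb_a(v)` of the vertex `v` under the cyclic
group generated by `a`. -/
noncomputable def orbitCard {d : ℕ} (a : Equiv.Perm (Vertex d)) (v : Vertex d) : ℕ :=
  Nat.card (Set.range fun n : ℤ => (a ^ n) v)

/-- The orbit-signalizer `OS(a) = { a^m|_v : v ∈ X^*, m = |Orb_a(v)| }`. -/
noncomputable def OS {d : ℕ} (a : Equiv.Perm (Vertex d)) : Set (Equiv.Perm (Vertex d)) :=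
  {s | ∃ v : Vertex d, s = state (a ^ orbitCard a v) v}

/-- `a` has finite orbit-signalizer. -/
def FiniteOS {d : ℕ} (a : Equiv.Perm (Vertex d)) : Prop := (OS a).Finite

/-- A self-similar (state-closed) subgroup. -/
def SelfSimilar {d : ℕ} (G : Subgroup (Equiv.Perm (Vertex d))) : Prop :=
  ∀ g ∈ G, ∀ v : Vertex d, state g v ∈ G

/-- A contracting group: there is a finite set `N ⊆ G` such that every
`g ∈ G` has all its states in `N` from some level on. -/
def ContractingGroup {d : ℕ} (G : Subgroup (Equiv.Perm (Vertex d))) : Prop :=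
  ∃ N : Set (Equiv.Perm (Vertex d)), N.Finite ∧ N ⊆ (G : Set (Equiv.Perm (Vertex d))) ∧
    ∀ g ∈ G, ∃ n : ℕ, ∀ v : Vertex d, n ≤ v.length → state g v ∈ N

/-- A contracting automorphism: the self-similar group generated by all of its
states is contracting. -/
def ContractingAut {d : ℕ} (f : Equiv.Perm (Vertex d)) : Prop :=
  ContractingGroup (Subgroup.closure (Set.range fun v : Vertex d => state f v))

/-- The activity sequence `θ_k(g)`: the number of vertices `v` of level `k`
whose state `g|_v` acts nontrivially on the first level `X`. -/
noncomputable def theta {d : ℕ} (g : Equiv.Perm (Vertex d)) (k : ℕ) : ℕ :=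
  Nat.card {v : Vertex d // v.length = k ∧ ∃ x : Fin d, state g v [x] ≠ [x]}

/-- A bounded automorphism: a finite-state automorphism with bounded activity
sequence.  The bounded automorphisms form the group `Pol(0)`. -/
def BoundedAut {d : ℕ} (g : Equiv.Perm (Vertex d)) : Prop :=
  FiniteState g ∧ ∃ C : ℕ, ∀ k : ℕ, theta g k ≤ C

/-- A polynomial automorphism (an element of `Pol(∞)`): a finite-state
automorphism whose activity sequence is polynomially bounded. -/
def PolyAut {d : ℕ} (g : Equiv.Perm (Vertex d)) : Prop :=
  FiniteState g ∧ ∃ p : Polynomial ℕ, ∀ k : ℕ, theta g k ≤ p.eval k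

/-- A finitary automorphism (an element of `Pol(-1)`): all states at some
level are trivial. -/
def Finitary {d : ℕ} (g : Equiv.Perm (Vertex d)) : Prop :=
  ∃ k : ℕ, ∀ v : Vertex d, v.length = k → state g v = 1

/-- A functionally recursive automorphism: a member of some finitely generated
self-similar subgroup of `Aut(T)`.  These form the group `FR(X)`. -/
def FunctionallyRecursive {d : ℕ} (g : Equiv.Perm (Vertex d)) : Prop :=
  ∃ G : Subgroup (Equiv.Perm (Vertex d)), G ≤ treeAut d ∧ SelfSimilar G ∧
    (∃ S : Set (Equiv.Perm (Vertex d)), S.Finite ∧ G = Subgroup.closure S) ∧ g ∈ G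

/-! An automorphism `h` acting as `π` on the first level with states `c x` at the vertices
`[x]` conjugates `a` to `b` exactly when `c (σ x) * a|_[x] = b|_[π x] * c x` for all `x`, where
`σ` is the action of `a` on the first level: the functions `x ↦ a|_[x]` and `x ↦ b|_[π x]`
must be cohomologous cocycles over `σ`. Their products around the cycle of a point `r`, of
length `p`, are the states `a^p|_[r]` and `b^p|_[π r]`. If `g * a^p|_[r] * g⁻¹ = b^p|_[π r]`,
then `n ↦ b^n|_[π r] * g * (a^n|_[r])⁻¹` is `p`-periodic, so it defines `c` on the cycle
of `r`. -/

open Function Equiv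

section Cocycle

variable {X G : Type*}

def cocycleProd [Monoid G] (σ : Perm X) (α : X → G) : ℕ → X → G
  | 0, _ => 1
  | n + 1, x => α ((σ ^ n) x) * cocycleProd σ α n x

variable (σ : Perm X)

@[simp]
lemma cocycleProd_zero [Monoid G] (α : X → G) (x : X) : cocycleProd σ α 0 x = 1 := rfl

lemma cocycleProd_succ [Monoid G] (α : X → G) (n : ℕ) (x : X) :
    cocycleProd σ α (n + 1) x = α ((σ ^ n) x) * cocycleProd σ α n x := rfl

lemma cocycleProd_add [Monoid G] (α : X → G) (m n : ℕ) (x : X) :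
    cocycleProd σ α (m + n) x = cocycleProd σ α m ((σ ^ n) x) * cocycleProd σ α n x := by
  induction m with
  | zero => simp
  | succ m ih =>
    rw [Nat.add_right_comm, cocycleProd_succ, cocycleProd_succ, ih, pow_add, Perm.mul_apply,
      mul_assoc]

lemma map_cocycleProd [Monoid G] {H : Type*} [Monoid H] (f : G →* H) (α : X → G) (n : ℕ)
    (x : X) : f (cocycleProd σ α n x) = cocycleProd σ (f ∘ α) n x := by
  induction n with
  | zero => simp
  | succ n ih => simp [cocycleProd_succ, ih]

def cocycleTwist [Group G] (α β : X → G) (r : X) (g : G) (n : ℕ) : G :=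
  cocycleProd σ β n r * g * (cocycleProd σ α n r)⁻¹

variable [Group G] {α β : X → G} {r : X} {g : G}

lemma cocycleTwist_add_minimalPeriod
    (hg : g * cocycleProd σ α (minimalPeriod σ r) r * g⁻¹ =
      cocycleProd σ β (minimalPeriod σ r) r)
    (n : ℕ) :
    cocycleTwist σ α β r g (n + minimalPeriod σ r) = cocycleTwist σ α β r g n := by
  have hr : (σ ^ minimalPeriod σ r) r = r := by
    rw [← Perm.iterate_eq_pow]; exact iterate_minimalPeriod
  simp only [cocycleTwist, cocycleProd_add, hr, ← hg]
  group

lemma cocycleTwist_mod_minimalPeriod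
    (hg : g * cocycleProd σ α (minimalPeriod σ r) r * g⁻¹ =
      cocycleProd σ β (minimalPeriod σ r) r)
    (n : ℕ) :
    cocycleTwist σ α β r g (n % minimalPeriod σ r) = cocycleTwist σ α β r g n := by
  conv_rhs => rw [← Nat.mod_add_div n (minimalPeriod σ r)]
  induction n / minimalPeriod σ r with
  | zero => rfl
  | succ k ih => rw [ih, Nat.mul_succ, ← add_assoc, cocycleTwist_add_minimalPeriod σ hg]

lemma cocycleTwist_eq_of_pow_apply_eq [Finite X]
    (hg : g * cocycleProd σ α (minimalPeriod σ r) r * g⁻¹ =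
      cocycleProd σ β (minimalPeriod σ r) r)
    {m n : ℕ} (h : (σ ^ m) r = (σ ^ n) r) :
    cocycleTwist σ α β r g m = cocycleTwist σ α β r g n := by
  have hpos : 0 < minimalPeriod σ r :=
    minimalPeriod_pos_of_mem_periodicPts (σ.injective.mem_periodicPts r)
  have hmod : m % minimalPeriod σ r = n % minimalPeriod σ r := by
    rw [← iterate_eq_iterate_iff_of_lt_minimalPeriod (Nat.mod_lt _ hpos) (Nat.mod_lt _ hpos),
      iterate_mod_minimalPeriod_eq, iterate_mod_minimalPeriod_eq, Perm.iterate_eq_pow,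
      Perm.iterate_eq_pow, h]
  rw [← cocycleTwist_mod_minimalPeriod σ hg m, hmod, cocycleTwist_mod_minimalPeriod σ hg n]

theorem exists_cohomologous_of_forall_isConj [Finite X]
    (h : ∀ x, IsConj (cocycleProd σ α (minimalPeriod σ x) x)
      (cocycleProd σ β (minimalPeriod σ x) x)) :
    ∃ c : X → G, ∀ x, c (σ x) * α x = β x * c x := by
  choose g hg using fun x => isConj_iff.mp (h x)
  let rep : X → X := fun x => (Quotient.mk (Perm.SameCycle.setoid σ) x).out
  have hrep_apply : ∀ x, rep (σ x) = rep x := fun x =>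
    congrArg Quotient.out (Quotient.sound (Perm.SameCycle.refl σ x).apply_right.symm)
  have hrep (x : X) : σ.SameCycle (rep x) x := Quotient.mk_out (s := Perm.SameCycle.setoid σ) x
  choose k hk using fun x => (hrep x).exists_nat_pow_eq
  refine ⟨fun x => cocycleTwist σ α β (rep x) (g (rep x)) (k x), fun x => ?_⟩
  have hsucc : (σ ^ k (σ x)) (rep x) = (σ ^ (k x + 1)) (rep x) := by
    rw [← hrep_apply, hk, hrep_apply, pow_succ', Perm.mul_apply, hk]
  change cocycleTwist σ α β (rep (σ x)) (g (rep (σ x))) (k (σ x)) * α x =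
    β x * cocycleTwist σ α β (rep x) (g (rep x)) (k x)
  rw [hrep_apply, cocycleTwist_eq_of_pow_apply_eq σ (hg (rep x)) hsucc]
  simp only [cocycleTwist, cocycleProd_succ, hk]
  group

end Cocycle

section Orbit

variable {α β : Type*} {ι : α → β} {σ : Perm α} {g : Perm β}

lemma Function.Semiconj.perm_zpow (h : Semiconj ι σ g) (n : ℤ) :
    Semiconj ι ⇑(σ ^ n) ⇑(g ^ n) := by
  induction n using Int.induction_on with
  | zero => exact Semiconj.id_right
  | succ n ih => simpa only [zpow_add_one, Perm.coe_mul] using ih.comp_right h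
  | pred n ih =>
    simpa only [zpow_sub_one, Perm.coe_mul, Perm.coe_inv] using
      ih.comp_right (h.inverses_right σ.apply_symm_apply g.symm_apply_apply)

lemma Equiv.Perm.nat_card_range_zpow_apply [Finite α] (σ : Perm α) (x : α) :
    Nat.card (Set.range fun n : ℤ => (σ ^ n) x) = minimalPeriod σ x := by
  classical
  cases nonempty_fintype α
  have : (Set.range fun n : ℤ => (σ ^ n) x) = MulAction.orbit (Subgroup.zpowers σ) x := by
    ext y
    simp only [Set.mem_range, MulAction.mem_orbit_iff, Subgroup.exists_zpowers]
    rfl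
  rw [this, Nat.card_eq_fintype_card, ← MulAction.minimalPeriod_eq_card]
  rfl

end Orbit

section TreeAut

variable {d : ℕ} {g h : Perm (Vertex d)}

lemma IsTreeAut.apply_nil (hg : IsTreeAut g) : g [] = [] :=
  List.length_eq_zero_iff.mp (hg.1 [])

lemma IsTreeAut.apply_append_eq_append_drop (hg : IsTreeAut g) (v w : Vertex d) :
    g (v ++ w) = g v ++ (g (v ++ w)).drop v.length := by
  obtain ⟨t, ht⟩ := hg.2 v w
  rw [← ht, List.drop_left' (hg.1 v)]

lemma IsTreeAut.bijective_drop (hg : IsTreeAut g) (v : Vertex d) :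
    Bijective fun w : Vertex d => (g (v ++ w)).drop v.length := by
  refine ⟨fun w w' hw => ?_, fun u => ⟨(g⁻¹ (g v ++ u)).drop v.length, ?_⟩⟩
  · apply List.append_cancel_left (as := v)
    apply g.injective
    rw [hg.apply_append_eq_append_drop, hg.apply_append_eq_append_drop v w']
    exact congrArg _ hw
  · have hg' : IsTreeAut g⁻¹ := (treeAut d).inv_mem hg
    have hv : g⁻¹ (g v) = v := g.symm_apply_apply v
    have := hg'.apply_append_eq_append_drop (g v) u
    rw [hv, hg.1] at this
    change (g (v ++ _)).drop v.length = u
    rw [← this, Perm.coe_inv, apply_symm_apply, List.drop_left' (hg.1 v)]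

lemma IsTreeAut.apply_append (hg : IsTreeAut g) (v w : Vertex d) :
    g (v ++ w) = g v ++ state g v w := by
  rw [state, dif_pos (hg.bijective_drop v)]
  exact hg.apply_append_eq_append_drop v w

lemma IsTreeAut.apply_cons (hg : IsTreeAut g) {x y : Fin d}
    (hxy : g [x] = [y]) (w : Vertex d) : g (x :: w) = y :: state g [x] w := by
  simpa [hxy] using hg.apply_append [x] w

lemma IsTreeAut.state_eq (hg : IsTreeAut g) {v : Vertex d} {e : Perm (Vertex d)}
    (he : ∀ w, g (v ++ w) = g v ++ e w) : state g v = e :=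
  Equiv.ext fun w => List.append_cancel_left ((hg.apply_append v w).symm.trans (he w))

lemma isTreeAut_state (hg : IsTreeAut g) (v : Vertex d) : IsTreeAut (state g v) := by
  refine ⟨fun w => ?_, fun u w => ?_⟩
  · have := congrArg List.length (hg.apply_append v w)
    rw [hg.1, List.length_append, List.length_append, hg.1] at this
    omega
  · obtain ⟨t, ht⟩ := hg.2 (v ++ u) w
    rw [List.append_assoc, hg.apply_append, hg.apply_append, List.append_assoc] at ht
    exact ⟨t, List.append_cancel_left ht⟩

lemma state_one (v : Vertex d) : state (1 : Perm (Vertex d)) v = 1 :=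
  IsTreeAut.state_eq (treeAut d).one_mem fun _ => rfl

lemma IsTreeAut.state_mul (hg : IsTreeAut g) (hh : IsTreeAut h) (v : Vertex d) :
    state (g * h) v = state g (h v) * state h v :=
  IsTreeAut.state_eq ((treeAut d).mul_mem hg hh) fun w => by
    rw [Perm.mul_apply, hh.apply_append, hg.apply_append, Perm.mul_apply, Perm.mul_apply]

lemma IsTreeAut.state_pow {α : Type*} {ι : α → Vertex d} {σ : Perm α} (hg : IsTreeAut g)
    (hι : Semiconj ι σ g) (n : ℕ) (x : α) :
    state (g ^ n) (ι x) = cocycleProd σ (fun y => state g (ι y)) n x := by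
  induction n with
  | zero => exact state_one _
  | succ n ih =>
    have hn : (g ^ n) (ι x) = ι ((σ ^ n) x) := by
      simpa only [Perm.iterate_eq_pow] using ((hι.iterate_right n).eq x).symm
    rw [pow_succ', hg.state_mul ((treeAut d).pow_mem hg n), ih, cocycleProd_succ, hn]

lemma orbitCard_eq_minimalPeriod {α : Type*} [Finite α] {ι : α → Vertex d} {σ : Perm α}
    (hι : Injective ι) (h : Semiconj ι σ g) (x : α) :
    orbitCard g (ι x) = minimalPeriod σ x := by
  have : (Set.range fun n : ℤ => (g ^ n) (ι x)) = ι '' Set.range fun n : ℤ => (σ ^ n) x := by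
    rw [← Set.range_comp]
    exact congrArg Set.range (funext fun n => ((h.perm_zpow n).eq x).symm)
  rw [orbitCard, this, Nat.card_image_of_injective hι, σ.nat_card_range_zpow_apply]

lemma IsTreeAut.exists_semiconj_singleton (hg : IsTreeAut g) :
    ∃ σ : Perm (Fin d), Semiconj (fun x => [x]) σ g := by
  choose f hf using fun x : Fin d => List.length_eq_one_iff.mp (hg.1 [x])
  have hf_inj : Injective f := fun x y hxy =>
    List.singleton_injective (g.injective ((hf x).trans (hxy ▸ (hf y).symm)))
  exact ⟨Equiv.ofBijective f (Finite.injective_iff_bijective.mp hf_inj), fun x => (hf x).symm⟩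

end TreeAut

section OfFirstLevel

variable {d : ℕ}

def ofFirstLevel (π : Perm (Fin d)) (c : Fin d → Perm (Vertex d)) : Perm (Vertex d) where
  toFun
    | [] => []
    | x :: w => π x :: c x w
  invFun
    | [] => []
    | y :: w => π⁻¹ y :: (c (π⁻¹ y))⁻¹ w
  left_inv := by rintro (_ | ⟨x, w⟩) <;> simp
  right_inv := by rintro (_ | ⟨y, w⟩) <;> simp

variable {π : Perm (Fin d)} {c : Fin d → Perm (Vertex d)}

@[simp]
lemma ofFirstLevel_nil : ofFirstLevel π c [] = [] := rfl

@[simp]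
lemma ofFirstLevel_cons (x : Fin d) (w : Vertex d) :
    ofFirstLevel π c (x :: w) = π x :: c x w := rfl

lemma isTreeAut_ofFirstLevel (hc : ∀ x, IsTreeAut (c x)) : IsTreeAut (ofFirstLevel π c) := by
  refine ⟨fun v => ?_, fun v w => ?_⟩
  · cases v with
    | nil => rfl
    | cons x w => simp [(hc x).1 w]
  · cases v with
    | nil => exact List.nil_prefix
    | cons x v => exact List.cons_prefix_cons.mpr ⟨rfl, (hc x).2 v w⟩

lemma semiconjBy_ofFirstLevel {a b : Perm (Vertex d)} {σ : Perm (Fin d)}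
    (ha : IsTreeAut a) (hb : IsTreeAut b)
    (haσ : Semiconj (fun x => [x]) σ a) (hbσ : Semiconj (fun x => [π x]) σ b)
    (hc : ∀ x, c (σ x) * state a [x] = state b [π x] * c x) :
    SemiconjBy (ofFirstLevel π c) a b := by
  refine Equiv.ext fun v => ?_
  cases v with
  | nil => simp [ha.apply_nil, hb.apply_nil]
  | cons x w =>
    rw [Perm.mul_apply, Perm.mul_apply, ha.apply_cons (haσ x).symm, ofFirstLevel_cons,
      ofFirstLevel_cons, hb.apply_cons (hbσ x).symm]
    exact congrArg _ (DFunLike.congr_fun (hc x) w)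

end OfFirstLevel

theorem conj_of_firstLevel_conj_general
    (d : ℕ) (a b : Equiv.Perm (Vertex d))
    (ha : IsTreeAut a) (hb : IsTreeAut b)
    (π : Equiv.Perm (Fin d))
    (hπ : ∀ x : Fin d, b ([π x] : Vertex d) = (a ([x] : Vertex d)).map π)
    (hstates : ∀ x : Fin d,
      ∃ h : Equiv.Perm (Vertex d), IsTreeAut h ∧
        h * state (a ^ orbitCard a ([x] : Vertex d)) ([x] : Vertex d) * h⁻¹ =
          state (b ^ orbitCard a ([x] : Vertex d)) ([π x] : Vertex d)) :
    ∃ h : Equiv.Perm (Vertex d), IsTreeAut h ∧ h * a * h⁻¹ = b := by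
  obtain ⟨σ, haσ⟩ := ha.exists_semiconj_singleton
  have hbσ : Semiconj (fun x => [π x]) σ b := fun x => by simp [hπ, ← haσ x]
  let α : Fin d → treeAut d := fun x => ⟨state a [x], isTreeAut_state ha [x]⟩
  let β : Fin d → treeAut d := fun x => ⟨state b [π x], isTreeAut_state hb [π x]⟩
  obtain ⟨c, hc⟩ := exists_cohomologous_of_forall_isConj σ (α := α) (β := β) fun x => by
    obtain ⟨h, hh, hconj⟩ := hstates x
    rw [orbitCard_eq_minimalPeriod List.singleton_injective haσ, ha.state_pow haσ,
      hb.state_pow hbσ] at hconj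
    refine isConj_iff.mpr ⟨⟨h, hh⟩, Subtype.ext ?_⟩
    have hcoe (γ : Fin d → treeAut d) (n : ℕ) :
        ((cocycleProd σ γ n x : treeAut d) : Perm (Vertex d)) =
          cocycleProd σ (fun y => ↑(γ y)) n x :=
      map_cocycleProd σ (treeAut d).subtype γ n x
    simpa only [Subgroup.coe_mul, Subgroup.coe_inv, hcoe] using hconj
  refine ⟨ofFirstLevel π fun x => c x, isTreeAut_ofFirstLevel fun x => (c x).2, ?_⟩
  rw [mul_inv_eq_iff_eq_mul]
  exact semiconjBy_ofFirstLevel ha hb haσ hbσ fun x => congrArg Subtype.val (hc x)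

/-- Let `a, b ∈ Aut(T)` and let `π` be a permutation of the
first level `X` conjugating the first-level action of `a` to that of `b`.  If
for every point `x` of the first level (covering each orbit `O` of `a` on `X`)
the automorphisms `a^{|O|}|_x` and `b^{|O|}|_{x^π}` are conjugate in `Aut(T)`,
then `a` and `b` are conjugate in `Aut(T)`. -/
theorem conj_of_firstLevel_conj
    (d : ℕ) (hd : 2 ≤ d) (a b : Equiv.Perm (Vertex d))
    (ha : IsTreeAut a) (hb : IsTreeAut b)
    (π : Equiv.Perm (Fin d))
    (hπ : ∀ x : Fin d, b ([π x] : Vertex d) = (a ([x] : Vertex d)).map π)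
    (hstates : ∀ x : Fin d,
      ∃ h : Equiv.Perm (Vertex d), IsTreeAut h ∧
        h * state (a ^ orbitCard a ([x] : Vertex d)) ([x] : Vertex d) * h⁻¹ =
          state (b ^ orbitCard a ([x] : Vertex d)) ([π x] : Vertex d)) :
    ∃ h : Equiv.Perm (Vertex d), IsTreeAut h ∧ h * a * h⁻¹ = b :=
  conj_of_firstLevel_conj_general d a b ha hb π hπ hstates
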